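/- arXiv:1102.3132 — 3 statements merged into one kernel-verified Lean document; each statement's English description precedes it below -/
import Mathlib

section
/- Let X be a finite alphabet, l, r positive integers, f : X^r → ℝ≥0 not identically zero. Suppose strictly positive normalized messages m_{v→f}, m_{f→v} : X → ℝ (each summing to 1) satisfy the BP equations: m_{v→f}(x) = m_{f→v}(x)^{l−1}/Σ_z m_{f→v}(z)^{l−1}, and m_{f→v}(x) = B(x)/Σ_z B(z) where B(x) := Σ_{i=1}^r Σ_{x∈X^r : x_i = x} f(x) ∏_{j≠i} m_{v→f}(x_j). Define Z_v := Σ_x m_{f→v}(x)^l, Z_f := Σ_{x∈X^r} f(x) ∏_{i=1}^r m_{v→f}(x_i), Z_{fv} := Σ_x m_{f→v}(x) m_{v→f}(x), and set ν(x) := m_{f→v}(x)^l/Z_v, μ(x) := f(x)∏_{i=1}^r m_{v→f}(x_i)/Z_f. Then (ν,μ) satisfies the consistency condition (1/r)Σ_{i=1}^r Σ_{x∈X^r : x_i = z} μ(x) = ν(z) for all z ∈ X, and (l/r)H(μ) − (l−1)H(ν) + (l/r)Σ_{x∈X^r} μ(x) log f(x) = (l/r) log Z_f + log Z_v − l log Z_{fv}.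 -/
open Finset

/-- The factor-to-variable belief propagation aggregate
`B(x) = Σ_{i=1}^r Σ_{y ∈ X^r : y_i = x} f(y) ∏_{j≠i} m(y_j)`. -/
noncomputable def bpB {X : Type*} [Fintype X] [DecidableEq X] {r : ℕ}
    (f : (Fin r → X) → ℝ) (m : X → ℝ) (x : X) : ℝ :=
  ∑ i : Fin r, ∑ y ∈ Finset.univ.filter (fun y : Fin r → X => y i = x),
    f y * ∏ j ∈ Finset.univ.erase i, m (y j)

/-!
At a BP fixed point `m_{v→f}(z) B(z) ∝ m_{f→v}(z)^l`, and `m_{v→f}(z) B(z)` is the total weight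
`f(x) ∏ m_{v→f}(x_i)` of the pairs `(i, x)` with `x_i = z`: this is the consistency condition.
As `μ` and `ν` are normalized products of messages, consistency turns `Σ μ log ∏ m_{v→f}(x_i)`
into `r Σ ν log m_{v→f}`, and `log m_{v→f} = (l - 1) log m_{f→v} - log Σ m_{f→v}^{l-1}`; so both
entropies are affine in `Σ ν log m_{f→v}`, whose coefficients cancel in the Bethe combination,
and `Z_fv = Z_v / Σ m_{f→v}^{l-1}` matches the remaining constants.
-/

open Real

theorem sum_div_mul_log_div {ι : Type*} [Fintype ι] (w : ι → ℝ) {Z : ℝ} (hw : ∑ i, w i = Z) :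
    ∑ i, w i / Z * log (w i / Z) = ∑ i, w i / Z * log (w i) - log Z := by
  rcases eq_or_ne Z 0 with rfl | hZ
  · simp
  have hterm : ∀ i, w i / Z * log (w i / Z) = w i / Z * log (w i) - w i / Z * log Z := by
    intro i
    rcases eq_or_ne (w i) 0 with h | h
    · simp [h]
    · rw [log_div h hZ]; ring
  rw [sum_congr rfl fun i _ => hterm i, sum_sub_distrib, ← sum_mul, ← sum_div, hw,
    div_self hZ, one_mul]

theorem sum_mul_log_eq_of_eq_pow_div {ι : Type*} [Fintype ι] (g : ι → ℝ) (l : ℕ) {Z : ℝ}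
    (hZ : Z = ∑ x, g x ^ l) {ν : ι → ℝ} (hν : ∀ x, ν x = g x ^ l / Z) :
    ∑ x, ν x * log (ν x) = l * ∑ x, ν x * log (g x) - log Z := by
  obtain rfl : ν = fun x => g x ^ l / Z := funext hν
  rw [sum_div_mul_log_div _ hZ.symm, mul_sum]
  congr 1
  exact sum_congr rfl fun x _ => by rw [log_pow]; ring

theorem mul_eq_pow_div_of_eq_pow_pred_div {l : ℕ} (hl : l ≠ 0) {a b S : ℝ}
    (h : a = b ^ (l - 1) / S) : a * b = b ^ l / S := by
  rw [h, div_mul_eq_mul_div, pow_sub_one_mul hl]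

theorem sum_mul_log_eq_of_eq_pow_pred_div {ι : Type*} [Fintype ι] [Nonempty ι] {l : ℕ}
    (hl : 0 < l) {g m ν : ι → ℝ} (hg : ∀ x, 0 < g x)
    (hm : ∀ x, m x = g x ^ (l - 1) / ∑ z, g z ^ (l - 1)) (hν : ∑ x, ν x = 1) :
    ∑ x, ν x * log (m x) = (l - 1) * ∑ x, ν x * log (g x) - log (∑ z, g z ^ (l - 1)) := by
  have hS : 0 < ∑ z, g z ^ (l - 1) := sum_pos (fun z _ => pow_pos (hg z) _) univ_nonempty
  calc ∑ x, ν x * log (m x)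
      = ∑ x, ((l - 1) * (ν x * log (g x)) - ν x * log (∑ z, g z ^ (l - 1))) := by
        refine sum_congr rfl fun x _ => ?_
        rw [hm x, log_div (pow_pos (hg x) _).ne' hS.ne', log_pow, Nat.cast_pred hl]
        ring
    _ = (l - 1) * ∑ x, ν x * log (g x) - log (∑ z, g z ^ (l - 1)) := by
        rw [sum_sub_distrib, ← mul_sum, ← sum_mul, hν, one_mul]

section CoordinateFibers

variable {X : Type*} [Fintype X] [DecidableEq X] {r : ℕ}

theorem sum_sum_coord_fiber (g : (Fin r → X) → ℝ) :
    ∑ z, ∑ i : Fin r, ∑ y ∈ univ.filter (fun y : Fin r → X => y i = z), g y =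
      r * ∑ y, g y := by
  rw [sum_comm]
  simp [sum_fiberwise]

theorem sum_mul_sum_comp_eq_sum_coord_fiber (g : (Fin r → X) → ℝ) (φ : X → ℝ) :
    ∑ y, g y * ∑ i, φ (y i) =
      ∑ z, (∑ i : Fin r, ∑ y ∈ univ.filter (fun y : Fin r → X => y i = z), g y) * φ z := by
  simp_rw [sum_mul, mul_sum]
  rw [sum_comm, sum_comm (s := univ (α := X))]
  refine sum_congr rfl fun i _ => ?_
  rw [← sum_fiberwise univ (· i) (fun y => g y * φ (y i))]
  exact sum_congr rfl fun z _ => sum_congr rfl fun y hy => by rw [(mem_filter.mp hy).2]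

theorem sum_coord_fiber_mul_prod_eq_mul_bpB (f : (Fin r → X) → ℝ) (m : X → ℝ) (z : X) :
    ∑ i, ∑ y ∈ univ.filter (fun y : Fin r → X => y i = z), f y * ∏ j, m (y j) =
      m z * bpB f m z := by
  rw [bpB, mul_sum]
  refine sum_congr rfl fun i _ => ?_
  rw [mul_sum]
  refine sum_congr rfl fun y hy => ?_
  rw [← mul_prod_erase univ (fun j => m (y j)) (mem_univ i), (mem_filter.mp hy).2]
  ring

theorem sum_mul_log_eq_of_eq_mul_prod_div {f : (Fin r → X) → ℝ} {m : X → ℝ}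
    (hm : ∀ x, m x ≠ 0) {Z : ℝ} (hZ : Z = ∑ y, f y * ∏ i, m (y i)) {μ : (Fin r → X) → ℝ}
    (hμ : ∀ y, μ y = (f y * ∏ i, m (y i)) / Z) :
    ∑ y, μ y * log (μ y) = ∑ y, μ y * log (f y) +
      ∑ z, (∑ i, ∑ y ∈ univ.filter (fun y : Fin r → X => y i = z), μ y) * log (m z) -
        log Z := by
  rw [← sum_mul_sum_comp_eq_sum_coord_fiber, ← sum_add_distrib]
  obtain rfl : μ = fun y => (f y * ∏ i, m (y i)) / Z := funext hμ
  rw [sum_div_mul_log_div _ hZ.symm]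
  congr 1
  refine sum_congr rfl fun y _ => ?_
  rcases eq_or_ne (f y) 0 with h | h
  · simp [h]
  · rw [log_mul h (prod_ne_zero_iff.mpr fun i _ => hm (y i)), log_prod fun i _ => hm (y i)]
    ring

end CoordinateFibers

section BPFixedPoint

variable {X : Type*} [Fintype X] [DecidableEq X] {r : ℕ}

theorem sum_bpB_ne_zero {f : (Fin r → X) → ℝ} {m mfv : X → ℝ}
    (hbp2 : ∀ x, mfv x = bpB f m x / ∑ z, bpB f m z) {x : X} (hx : mfv x ≠ 0) :
    ∑ z, bpB f m z ≠ 0 := by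
  intro h
  rw [hbp2 x, h, div_zero] at hx
  exact hx rfl

theorem sum_coord_fiber_mul_prod_of_bp {l : ℕ} (hl : l ≠ 0) {f : (Fin r → X) → ℝ} {mvf mfv : X → ℝ}
    (hmfv : ∀ x, mfv x ≠ 0)
    (hbp1 : ∀ x, mvf x = mfv x ^ (l - 1) / ∑ z, mfv z ^ (l - 1))
    (hbp2 : ∀ x, mfv x = bpB f mvf x / ∑ z, bpB f mvf z) (z : X) :
    ∑ i, ∑ y ∈ univ.filter (fun y : Fin r → X => y i = z), f y * ∏ j, mvf (y j) =
      mfv z ^ l * ((∑ x, bpB f mvf x) / ∑ x, mfv x ^ (l - 1)) := by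
  have hB : bpB f mvf z = mfv z * ∑ x, bpB f mvf x := by
    rw [hbp2 z, div_mul_cancel₀ _ (sum_bpB_ne_zero hbp2 (hmfv z))]
  rw [sum_coord_fiber_mul_prod_eq_mul_bpB, hB, ← mul_assoc,
    mul_eq_pow_div_of_eq_pow_pred_div hl (hbp1 z)]
  ring

theorem bp_factor_belief_coord_marginal [Nonempty X] {l : ℕ} (hl : l ≠ 0)
    {f : (Fin r → X) → ℝ} {mvf mfv : X → ℝ} (hmfv : ∀ x, 0 < mfv x)
    (hbp1 : ∀ x, mvf x = mfv x ^ (l - 1) / ∑ z, mfv z ^ (l - 1))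
    (hbp2 : ∀ x, mfv x = bpB f mvf x / ∑ z, bpB f mvf z) {Zv Zf : ℝ}
    (hZv : Zv = ∑ x, mfv x ^ l) (hZf : Zf = ∑ y, f y * ∏ i, mvf (y i))
    {ν : X → ℝ} (hν : ∀ x, ν x = mfv x ^ l / Zv)
    {μ : (Fin r → X) → ℝ} (hμ : ∀ y, μ y = (f y * ∏ i, mvf (y i)) / Zf) (z : X) :
    ∑ i, ∑ y ∈ univ.filter (fun y : Fin r → X => y i = z), μ y = r * ν z := by
  have hmarg := sum_coord_fiber_mul_prod_of_bp hl (fun x => (hmfv x).ne') hbp1 hbp2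
  set c := (∑ x, bpB f mvf x) / ∑ x, mfv x ^ (l - 1)
  have hc : c ≠ 0 := div_ne_zero (sum_bpB_ne_zero hbp2 (hmfv (Classical.arbitrary X)).ne')
    (sum_pos (fun x _ => pow_pos (hmfv x) _) univ_nonempty).ne'
  have hZv0 : Zv ≠ 0 := hZv ▸ (sum_pos (fun x _ => pow_pos (hmfv x) _) univ_nonempty).ne'
  have hZf : r * Zf = Zv * c := by
    rw [hZf, hZv, ← sum_sum_coord_fiber, sum_congr rfl fun z _ => hmarg z, sum_mul]
  have hZf0 : Zf ≠ 0 := by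
    rintro rfl
    exact mul_ne_zero hZv0 hc (by simpa using hZf.symm)
  simp_rw [hμ, ← sum_div, hmarg, hν]
  field_simp
  linear_combination mfv z ^ l * hZf.symm

end BPFixedPoint

theorem bp_fixed_point_bethe_identity_general
    {X : Type*} [Fintype X] [DecidableEq X] [Nonempty X]
    (l r : ℕ) (hl : 0 < l) (hr : 0 < r)
    (f : (Fin r → X) → ℝ)
    (mvf mfv : X → ℝ) (hmvf : ∀ x, 0 < mvf x) (hmfv : ∀ x, 0 < mfv x)
    (hbp1 : ∀ x, mvf x = mfv x ^ (l - 1) / ∑ z : X, mfv z ^ (l - 1))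
    (hbp2 : ∀ x, mfv x = bpB f mvf x / ∑ z : X, bpB f mvf z)
    (Zv Zf Zfv : ℝ)
    (hZv : Zv = ∑ x : X, mfv x ^ l)
    (hZf : Zf = ∑ y : Fin r → X, f y * ∏ i, mvf (y i))
    (hZfv : Zfv = ∑ x : X, mfv x * mvf x)
    (ν : X → ℝ) (hνdef : ∀ x, ν x = mfv x ^ l / Zv)
    (μ : (Fin r → X) → ℝ) (hμdef : ∀ x, μ x = (f x * ∏ i, mvf (x i)) / Zf) :
    (∀ z : X,
      (1 / (r : ℝ)) * ∑ i : Fin r,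
          ∑ x ∈ Finset.univ.filter (fun x : Fin r → X => x i = z), μ x = ν z) ∧
    ((l : ℝ) / (r : ℝ)) * (-∑ x : Fin r → X, μ x * Real.log (μ x))
        - ((l : ℝ) - 1) * (-∑ x : X, ν x * Real.log (ν x))
        + ((l : ℝ) / (r : ℝ)) * ∑ x : Fin r → X, μ x * Real.log (f x)
      = ((l : ℝ) / (r : ℝ)) * Real.log Zf + Real.log Zv - (l : ℝ) * Real.log Zfv := by
  have hcons := bp_factor_belief_coord_marginal hl.ne' hmfv hbp1 hbp2 hZv hZf hνdef hμdef
  refine ⟨fun z => by rw [hcons z]; field_simp, ?_⟩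
  have hS : 0 < ∑ z, mfv z ^ (l - 1) := sum_pos (fun z _ => pow_pos (hmfv z) _) univ_nonempty
  have hZv0 : 0 < Zv := hZv ▸ sum_pos (fun z _ => pow_pos (hmfv z) _) univ_nonempty
  have hν1 : ∑ x, ν x = 1 := by simp_rw [hνdef, ← sum_div, ← hZv, div_self hZv0.ne']
  have hZfv' : Zfv = Zv / ∑ z, mfv z ^ (l - 1) := by
    rw [hZfv, hZv, sum_div]
    exact sum_congr rfl fun z _ => by
      rw [mul_comm, mul_eq_pow_div_of_eq_pow_pred_div hl.ne' (hbp1 z)]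
  have hmarg_log : ∑ z, (∑ i, ∑ y ∈ univ.filter (fun y : Fin r → X => y i = z), μ y) *
      log (mvf z) = r * ∑ z, ν z * log (mvf z) := by
    simp_rw [hcons, mul_assoc, ← mul_sum]
  have hr0 : (r : ℝ) ≠ 0 := Nat.cast_ne_zero.mpr hr.ne'
  rw [sum_mul_log_eq_of_eq_mul_prod_div (fun x => (hmvf x).ne') hZf hμdef, hmarg_log,
    sum_mul_log_eq_of_eq_pow_pred_div hl hmfv hbp1 hν1,
    sum_mul_log_eq_of_eq_pow_div mfv l hZv hνdef, hZfv', log_div hZv0.ne' hS.ne']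
  field_simp
  ring

/-- at a BP fixed point, the beliefs `(ν,μ)` defined from the messages satisfy
the consistency condition, and `−F_Bethe(ν,μ)` equals `(l/r)log Z_f + log Z_v − l·log Z_fv`. -/
theorem bp_fixed_point_bethe_identity
    {X : Type*} [Fintype X] [DecidableEq X] [Nonempty X]
    (l r : ℕ) (hl : 0 < l) (hr : 0 < r)
    (f : (Fin r → X) → ℝ) (hf : ∀ x, 0 ≤ f x) (hfne : ∃ x, f x ≠ 0)
    (mvf mfv : X → ℝ) (hmvf : ∀ x, 0 < mvf x) (hmfv : ∀ x, 0 < mfv x)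
    (hmvf1 : ∑ x : X, mvf x = 1) (hmfv1 : ∑ x : X, mfv x = 1)
    (hbp1 : ∀ x, mvf x = mfv x ^ (l - 1) / ∑ z : X, mfv z ^ (l - 1))
    (hbp2 : ∀ x, mfv x = bpB f mvf x / ∑ z : X, bpB f mvf z)
    (Zv Zf Zfv : ℝ)
    (hZv : Zv = ∑ x : X, mfv x ^ l)
    (hZf : Zf = ∑ y : Fin r → X, f y * ∏ i, mvf (y i))
    (hZfv : Zfv = ∑ x : X, mfv x * mvf x)
    (ν : X → ℝ) (hνdef : ∀ x, ν x = mfv x ^ l / Zv)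
    (μ : (Fin r → X) → ℝ) (hμdef : ∀ x, μ x = (f x * ∏ i, mvf (x i)) / Zf) :
    (∀ z : X,
      (1 / (r : ℝ)) * ∑ i : Fin r,
          ∑ x ∈ Finset.univ.filter (fun x : Fin r → X => x i = z), μ x = ν z) ∧
    ((l : ℝ) / (r : ℝ)) * (-∑ x : Fin r → X, μ x * Real.log (μ x))
        - ((l : ℝ) - 1) * (-∑ x : X, ν x * Real.log (ν x))
        + ((l : ℝ) / (r : ℝ)) * ∑ x : Fin r → X, μ x * Real.log (f x)
      = ((l : ℝ) / (r : ℝ)) * Real.log Zf + Real.log Zv - (l : ℝ) * Real.log Zfv :=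
  bp_fixed_point_bethe_identity_general l r hl hr f mvf mfv hmvf hmfv hbp1 hbp2 Zv Zf Zfv hZv hZf
    hZfv ν hνdef μ hμdef
end

section
/- Let X be a finite alphabet, l, r positive integers, f : X^r → ℝ≥0. Let m_{v→f}, m_{f→v} : X → ℝ be strictly positive normalized messages (each summing to 1), h : X → ℝ strictly positive, and suppose: m_{v→f}(x) = h(x)m_{f→v}(x)^{l−1}/Σ_z h(z)m_{f→v}(z)^{l−1}; m_{f→v}(x) = B(x)/Σ_z B(z) with B(x) := Σ_{i=1}^r Σ_{x∈X^r : x_i = x} f(x)∏_{j≠i} m_{v→f}(x_j). Define Z_f := Σ_{x∈X^r} f(x)∏_{i=1}^r m_{v→f}(x_i), Z_v(x) := m_{f→v}(x)^l, Z_v := Σ_x h(x)Z_v(x), Z_{fv} := Σ_x m_{f→v}(x)m_{v→f}(x), ν(x) := h(x)m_{f→v}(x)^l/Z_v, μ(x) := f(x)∏_{i=1}^r m_{v→f}(x_i)/Z_f. Then (ν,μ) satisfies the consistency condition (1/r)Σ_{i=1}^r Σ_{x∈X^r : x_i = z} μ(x) = ν(z) for all z ∈ X, and (l/r)H(μ)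 − (l−1)H(ν) + (l/r)Σ_{x∈X^r} μ(x) log f(x) = (l/r) log Z_f + log Z_v − l log Z_{fv} − Σ_{x∈X} ν(x) log h(x) = (l/r) log Z_f + Σ_{x∈X} ν(x) log Z_v(x) − l log Z_{fv} + H(ν). -/
open Finset

open Real

/-! At a BP fixed point the variable belief `ν` and every edge marginal of the factor belief `μ`
are both the normalized product `m_{f→v} m_{v→f} / Z_{fv}`: their unnormalized versions are
`C₁ m_{f→v} m_{v→f}` and `C₂ m_{f→v} m_{v→f}`, where `C₁`, `C₂` are the normalizers of the two BP
equations. This gives consistency. For the free energy, expand `log μ` and `log ν` through their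
Gibbs forms, average `log m_{v→f}(x_i)` over `μ` through the edge marginals (which are `ν`), and
use `Z_v = C₁ Z_{fv}`. -/

theorem sum_mul_log_of_eq_mul_div {ι : Type*} [Fintype ι] {q p a b : ι → ℝ} {Z : ℝ}
    (hp : ∀ x, p x = a x * b x / Z) (hq : ∑ x, q x = 1) (ha : ∀ x, q x ≠ 0 → a x ≠ 0)
    (hb : ∀ x, b x ≠ 0) (hZ : Z ≠ 0) :
    ∑ x, q x * log (p x) = ∑ x, q x * log (a x) + ∑ x, q x * log (b x) - log Z := by
  have key : ∀ x, q x * log (p x) = q x * log (a x) + q x * log (b x) - q x * log Z := by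
    intro x
    rcases eq_or_ne (q x) 0 with hqx | hqx
    · simp [hqx]
    · rw [hp x, log_div (mul_ne_zero (ha x hqx) (hb x)) hZ, log_mul (ha x hqx) (hb x)]
      ring
  rw [sum_congr rfl fun x _ => key x, sum_sub_distrib, sum_add_distrib, ← sum_mul, hq, one_mul]

theorem sum_ne_zero_of_eq_div_sum {ι : Type*} [Fintype ι] [Nonempty ι] {n b : ι → ℝ}
    (hn : ∀ x, n x ≠ 0) (h : ∀ x, n x = b x / ∑ z, b z) : ∑ z, b z ≠ 0 :=
  let ⟨x⟩ := ‹Nonempty ι›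
  (div_ne_zero_iff.mp (h x ▸ hn x)).2

theorem div_sum_eq_div_sum_of_eq_mul {ι : Type*} [Fintype ι] {u v : ι → ℝ} {c : ℝ} (hc : c ≠ 0)
    (huv : ∀ x, u x = c * v x) (x : ι) : u x / ∑ z, u z = v x / ∑ z, v z := by
  simp_rw [huv, ← mul_sum, mul_div_mul_left _ _ hc]

section CoordMarginal

variable {X R : Type*} [Fintype X] [DecidableEq X] {r : ℕ}

def coordMarginal [AddCommMonoid R] (w : (Fin r → X) → R) (z : X) : R :=
  ∑ i, ∑ x ∈ univ.filter (fun x : Fin r → X => x i = z), w x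

theorem sum_coordMarginal [AddCommMonoid R] (w : (Fin r → X) → R) :
    ∑ z, coordMarginal w z = r • ∑ x, w x := by
  simp only [coordMarginal]
  rw [sum_comm]
  simp only [sum_fiberwise, sum_const, card_univ, Fintype.card_fin]

theorem sum_mul_sum_apply_eq_sum_coordMarginal_mul [CommSemiring R]
    (w : (Fin r → X) → R) (g : X → R) :
    ∑ x, w x * ∑ i, g (x i) = ∑ z, coordMarginal w z * g z := by
  simp only [coordMarginal, mul_sum, sum_mul]
  rw [sum_comm, sum_comm (s := univ (α := X))]
  refine sum_congr rfl fun i _ => ?_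
  rw [← sum_fiberwise univ (fun x => x i) (fun x => w x * g (x i))]
  exact sum_congr rfl fun z _ => sum_congr rfl fun x hx => by rw [(mem_filter.mp hx).2]

theorem coordMarginal_div [DivisionSemiring R] (w : (Fin r → X) → R) (c : R) (z : X) :
    coordMarginal (fun x => w x / c) z = coordMarginal w z / c := by
  simp only [coordMarginal, sum_div]

theorem coordMarginal_mul_prod (f : (Fin r → X) → ℝ) (m : X → ℝ) (z : X) :
    coordMarginal (fun y => f y * ∏ i, m (y i)) z = m z * bpB f m z := by
  simp only [coordMarginal, bpB, mul_sum]
  refine sum_congr rfl fun i _ => sum_congr rfl fun y hy => ?_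
  rw [← mul_prod_erase univ (fun j => m (y j)) (mem_univ i), (mem_filter.mp hy).2]
  ring

theorem sum_mul_log_sub_sum_mul_log_eq_of_eq_mul_prod_div {f μ : (Fin r → X) → ℝ} {m : X → ℝ}
    {Z : ℝ} (hμ : ∀ x, μ x = (f x * ∏ i, m (x i)) / Z) (hμ1 : ∑ x, μ x = 1) (hm : ∀ z, m z ≠ 0)
    (hZ : Z ≠ 0) :
    ∑ x, μ x * log (μ x) - ∑ x, μ x * log (f x) = ∑ z, coordMarginal μ z * log (m z) - log Z := by
  rw [sum_mul_log_of_eq_mul_div hμ hμ1 (fun x hx hf => hx (by rw [hμ x, hf, zero_mul, zero_div]))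
    (fun x => prod_ne_zero_iff.mpr fun i _ => hm _) hZ,
    ← sum_mul_sum_apply_eq_sum_coordMarginal_mul]
  simp only [log_prod fun i _ => hm _]
  ring

end CoordMarginal

namespace BeliefPropagation

section VariableSide

variable {ι : Type*} [Fintype ι] {h n m : ι → ℝ} {l : ℕ}

theorem mul_pow_eq_sum_mul_mul (hl : 0 < l) (hC : ∑ z, h z * n z ^ (l - 1) ≠ 0)
    (hm : ∀ x, m x = h x * n x ^ (l - 1) / ∑ z, h z * n z ^ (l - 1)) (x : ι) :
    h x * n x ^ l = (∑ z, h z * n z ^ (l - 1)) * (n x * m x) := by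
  obtain ⟨k, rfl⟩ : ∃ k, l = k + 1 := ⟨l - 1, by omega⟩
  simp only [Nat.add_sub_cancel] at hC hm ⊢
  rw [hm x, pow_succ]
  field_simp

variable [Nonempty ι]

theorem variable_belief_eq (hl : 0 < l) (hm : ∀ x, m x ≠ 0)
    (hbp : ∀ x, m x = h x * n x ^ (l - 1) / ∑ z, h z * n z ^ (l - 1)) (x : ι) :
    h x * n x ^ l / ∑ z, h z * n z ^ l = n x * m x / ∑ z, n z * m z :=
  div_sum_eq_div_sum_of_eq_mul (sum_ne_zero_of_eq_div_sum hm hbp)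
    (mul_pow_eq_sum_mul_mul hl (sum_ne_zero_of_eq_div_sum hm hbp) hbp) x

theorem variable_energy_eq {ν : ι → ℝ} (hl : 0 < l) (hh : ∀ x, h x ≠ 0) (hn : ∀ x, 0 < n x)
    (hm : ∀ x, 0 < m x) (hbp : ∀ x, m x = h x * n x ^ (l - 1) / ∑ z, h z * n z ^ (l - 1))
    (hν : ∀ x, ν x = h x * n x ^ l / ∑ z, h z * n z ^ l) :
    l * ∑ x, ν x * log (m x) - (l - 1) * ∑ x, ν x * log (ν x)
      = ∑ x, ν x * log (h x) - log (∑ z, h z * n z ^ l) + l * log (∑ z, n z * m z) := by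
  have hC := sum_ne_zero_of_eq_div_sum (fun x => (hm x).ne') hbp
  have hnm : 0 < ∑ z, n z * m z := sum_pos (fun z _ => mul_pos (hn z) (hm z)) univ_nonempty
  have hZ : ∑ z, h z * n z ^ l = (∑ z, h z * n z ^ (l - 1)) * ∑ z, n z * m z := by
    rw [mul_sum]
    exact sum_congr rfl fun x _ => mul_pow_eq_sum_mul_mul hl hC hbp x
  have hν1 : ∑ x, ν x = 1 := by
    simp_rw [hν, variable_belief_eq hl (fun x => (hm x).ne') hbp, ← sum_div]
    exact div_self hnm.ne'
  have hpow : ∀ k : ℕ, ∑ x, ν x * log (n x ^ k) = k * ∑ x, ν x * log (n x) := fun k => by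
    simp_rw [log_pow, mul_sum, mul_left_comm]
  have Hν := sum_mul_log_of_eq_mul_div hν hν1 (fun x _ => hh x)
    (fun x => pow_ne_zero l (hn x).ne') (hZ ▸ mul_ne_zero hC hnm.ne')
  have Hm := sum_mul_log_of_eq_mul_div hbp hν1 (fun x _ => hh x)
    (fun x => pow_ne_zero _ (hn x).ne') hC
  rw [hpow] at Hν Hm
  rw [Nat.cast_sub hl, Nat.cast_one] at Hm
  have hlog := congrArg log hZ
  rw [log_mul hC hnm.ne'] at hlog
  linear_combination (l : ℝ) * Hm - ((l : ℝ) - 1) * Hν + (l : ℝ) * hlog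

end VariableSide

theorem factor_marginal_eq {X : Type*} [Fintype X] [DecidableEq X] [Nonempty X] {r : ℕ}
    {f μ : (Fin r → X) → ℝ} {m n : X → ℝ} {Z : ℝ} (hn : ∀ x, n x ≠ 0)
    (hbp : ∀ x, n x = bpB f m x / ∑ z, bpB f m z) (hZ : Z = ∑ y, f y * ∏ i, m (y i))
    (hμ : ∀ y, μ y = (f y * ∏ i, m (y i)) / Z) (x : X) :
    (1 / (r : ℝ)) * coordMarginal μ x = n x * m x / ∑ z, n z * m z := by
  have hC := sum_ne_zero_of_eq_div_sum hn hbp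
  have hw : ∀ z, coordMarginal (fun y => f y * ∏ i, m (y i)) z = (∑ z, bpB f m z) * (n z * m z) :=
    fun z => by
      rw [coordMarginal_mul_prod, hbp z]
      field_simp
  have hsum : ∑ z, coordMarginal (fun y => f y * ∏ i, m (y i)) z = r * Z := by
    rw [sum_coordMarginal, nsmul_eq_mul, hZ]
  rw [show μ = fun y => (f y * ∏ i, m (y i)) / Z from funext hμ, coordMarginal_div,
    ← div_sum_eq_div_sum_of_eq_mul hC hw, hsum]
  ring

end BeliefPropagation

theorem fixed_variable_type_stationary_value_general
    {X : Type*} [Fintype X] [DecidableEq X] [Nonempty X]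
    (l r : ℕ) (hl : 0 < l) (hr : 0 < r)
    (f : (Fin r → X) → ℝ)
    (mvf mfv h : X → ℝ) (hmvf : ∀ x, 0 < mvf x) (hmfv : ∀ x, 0 < mfv x)
    (hh : ∀ x, 0 < h x)
    (hbp1 : ∀ x, mvf x = h x * mfv x ^ (l - 1) / ∑ z : X, h z * mfv z ^ (l - 1))
    (hbp2 : ∀ x, mfv x = bpB f mvf x / ∑ z : X, bpB f mvf z)
    (Zf : ℝ) (hZf : Zf = ∑ y : Fin r → X, f y * ∏ i, mvf (y i))
    (Zvx : X → ℝ) (hZvx : ∀ x, Zvx x = mfv x ^ l)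
    (Zv : ℝ) (hZv : Zv = ∑ x : X, h x * Zvx x)
    (Zfv : ℝ) (hZfv : Zfv = ∑ x : X, mfv x * mvf x)
    (ν : X → ℝ) (hνdef : ∀ x, ν x = h x * mfv x ^ l / Zv)
    (μ : (Fin r → X) → ℝ) (hμdef : ∀ x, μ x = (f x * ∏ i, mvf (x i)) / Zf) :
    (∀ z : X,
      (1 / (r : ℝ)) * ∑ i : Fin r,
          ∑ x ∈ Finset.univ.filter (fun x : Fin r → X => x i = z), μ x = ν z) ∧
    (((l : ℝ) / (r : ℝ)) * (-∑ x : Fin r → X, μ x * Real.log (μ x))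
        - ((l : ℝ) - 1) * (-∑ x : X, ν x * Real.log (ν x))
        + ((l : ℝ) / (r : ℝ)) * ∑ x : Fin r → X, μ x * Real.log (f x)
      = ((l : ℝ) / (r : ℝ)) * Real.log Zf + Real.log Zv - (l : ℝ) * Real.log Zfv
          - ∑ x : X, ν x * Real.log (h x)) ∧
    (((l : ℝ) / (r : ℝ)) * Real.log Zf + Real.log Zv - (l : ℝ) * Real.log Zfv
          - ∑ x : X, ν x * Real.log (h x)
      = ((l : ℝ) / (r : ℝ)) * Real.log Zf + ∑ x : X, ν x * Real.log (Zvx x)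
          - (l : ℝ) * Real.log Zfv + (-∑ x : X, ν x * Real.log (ν x))) := by
  have hr0 : (r : ℝ) ≠ 0 := by positivity
  have hZv' : Zv = ∑ x, h x * mfv x ^ l := by simp only [hZv, hZvx]
  have hνdef' : ∀ x, ν x = h x * mfv x ^ l / ∑ z, h z * mfv z ^ l := hZv' ▸ hνdef
  have hZfv0 : Zfv ≠ 0 := hZfv ▸ (sum_pos (fun z _ => mul_pos (hmfv z) (hmvf z)) univ_nonempty).ne'
  have hν : ∀ x, ν x = mfv x * mvf x / Zfv := fun x => by
    rw [hνdef', hZfv, BeliefPropagation.variable_belief_eq hl (fun x => (hmvf x).ne') hbp1]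
  have hcons : ∀ z, (1 / (r : ℝ)) * coordMarginal μ z = ν z := fun z => by
    rw [hν, hZfv, BeliefPropagation.factor_marginal_eq (fun x => (hmfv x).ne') hbp2 hZf hμdef]
  have hcons' : ∀ z, coordMarginal μ z = r * ν z := fun z => by
    rw [← hcons]
    field_simp
  have hν1 : ∑ x, ν x = 1 := by
    simp_rw [hν, ← sum_div, ← hZfv]
    exact div_self hZfv0
  have hμ1 : ∑ x, μ x = 1 := by
    rw [← hν1, ← sum_congr rfl fun z _ => hcons z, ← mul_sum, sum_coordMarginal, nsmul_eq_mul]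
    field_simp
  have hZf0 : Zf ≠ 0 := fun h0 => by simp [hμdef, h0] at hμ1
  have hμlog := sum_mul_log_sub_sum_mul_log_eq_of_eq_mul_prod_div hμdef hμ1
    (fun z => (hmvf z).ne') hZf0
  simp_rw [hcons', mul_assoc, ← mul_sum] at hμlog
  have hvarlog :=
    BeliefPropagation.variable_energy_eq hl (fun x => (hh x).ne') hmfv hmvf hbp1 hνdef'
  rw [← hZv', ← hZfv] at hvarlog
  have hνlog := sum_mul_log_of_eq_mul_div (q := ν) (fun x => (hνdef x).trans (by rw [hZvx])) hν1
    (fun x _ => (hh x).ne') (fun x => hZvx x ▸ pow_ne_zero _ (hmfv x).ne')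
    (hZv' ▸ (sum_pos (fun z _ => mul_pos (hh z) (pow_pos (hmfv z) l)) univ_nonempty).ne')
  refine ⟨hcons, ?_, by linear_combination hνlog⟩
  have hinv : (r : ℝ) * (1 / r) = 1 := mul_one_div_cancel hr0
  linear_combination (-(l : ℝ) / r) * hμlog - hvarlog - ((l : ℝ) * ∑ x, ν x * log (mvf x)) * hinv

/-- at a stationary point of the fixed-variable-type maximization (h-weighted
BP fixed point), the induced beliefs `(ν,μ)` are consistent and `−F_Bethe(ν,μ)` equals both
`(l/r)log Z_f + log Z_v − l log Z_fv − Σ ν log h` and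
`(l/r)log Z_f + Σ ν(x) log Z_v(x) − l log Z_fv + H(ν)`. -/
theorem fixed_variable_type_stationary_value
    {X : Type*} [Fintype X] [DecidableEq X] [Nonempty X]
    (l r : ℕ) (hl : 0 < l) (hr : 0 < r)
    (f : (Fin r → X) → ℝ) (hf : ∀ x, 0 ≤ f x)
    (mvf mfv h : X → ℝ) (hmvf : ∀ x, 0 < mvf x) (hmfv : ∀ x, 0 < mfv x)
    (hh : ∀ x, 0 < h x)
    (hmvf1 : ∑ x : X, mvf x = 1) (hmfv1 : ∑ x : X, mfv x = 1)
    (hbp1 : ∀ x, mvf x = h x * mfv x ^ (l - 1) / ∑ z : X, h z * mfv z ^ (l - 1))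
    (hbp2 : ∀ x, mfv x = bpB f mvf x / ∑ z : X, bpB f mvf z)
    (Zf : ℝ) (hZf : Zf = ∑ y : Fin r → X, f y * ∏ i, mvf (y i))
    (Zvx : X → ℝ) (hZvx : ∀ x, Zvx x = mfv x ^ l)
    (Zv : ℝ) (hZv : Zv = ∑ x : X, h x * Zvx x)
    (Zfv : ℝ) (hZfv : Zfv = ∑ x : X, mfv x * mvf x)
    (ν : X → ℝ) (hνdef : ∀ x, ν x = h x * mfv x ^ l / Zv)
    (μ : (Fin r → X) → ℝ) (hμdef : ∀ x, μ x = (f x * ∏ i, mvf (x i)) / Zf) :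
    (∀ z : X,
      (1 / (r : ℝ)) * ∑ i : Fin r,
          ∑ x ∈ Finset.univ.filter (fun x : Fin r → X => x i = z), μ x = ν z) ∧
    (((l : ℝ) / (r : ℝ)) * (-∑ x : Fin r → X, μ x * Real.log (μ x))
        - ((l : ℝ) - 1) * (-∑ x : X, ν x * Real.log (ν x))
        + ((l : ℝ) / (r : ℝ)) * ∑ x : Fin r → X, μ x * Real.log (f x)
      = ((l : ℝ) / (r : ℝ)) * Real.log Zf + Real.log Zv - (l : ℝ) * Real.log Zfv
          - ∑ x : X, ν x * Real.log (h x)) ∧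
    (((l : ℝ) / (r : ℝ)) * Real.log Zf + Real.log Zv - (l : ℝ) * Real.log Zfv
          - ∑ x : X, ν x * Real.log (h x)
      = ((l : ℝ) / (r : ℝ)) * Real.log Zf + ∑ x : X, ν x * Real.log (Zvx x)
          - (l : ℝ) * Real.log Zfv + (-∑ x : X, ν x * Real.log (ν x))) :=
  fixed_variable_type_stationary_value_general l r hl hr f mvf mfv h hmvf hmfv hh hbp1 hbp2 Zf hZf
    Zvx hZvx Zv hZv Zfv hZfv ν hνdef μ hμdef
end

section
/- Let X be a finite alphabet, l, r positive integers, f : X^r → ℝ≥0 not identically zero, and h : X → ℝ strictly positive (the magnetic field). Suppose strictly positive normalized messages m_{v→f}, m_{f→v} : X → ℝ (each summing to 1) satisfy: m_{v→f}(x) = h(x)m_{f→v}(x)^{l−1}/Σ_z h(z)m_{f→v}(z)^{l−1}, and m_{f→v}(x) = B(x)/Σ_z B(z) with B(x) := Σ_{i=1}^r Σ_{x∈X^r : x_i = x} f(x)∏_{j≠i} m_{v→f}(x_j). Define Z_v := Σ_x h(x)m_{f→v}(x)^l, Z_f := Σ_{x∈X^r} f(x)∏_{i=1}^r m_{v→f}(x_i),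 Z_{fv} := Σ_x m_{f→v}(x)m_{v→f}(x), ν(x) := h(x)m_{f→v}(x)^l/Z_v, μ(x) := f(x)∏_{i=1}^r m_{v→f}(x_i)/Z_f. Then (ν,μ) satisfies the consistency condition (1/r)Σ_{i=1}^r Σ_{x∈X^r : x_i = z} μ(x) = ν(z) for all z ∈ X, and (l/r)H(μ) − (l−1)H(ν) + (l/r)Σ_{x∈X^r} μ(x) log f(x) + Σ_{x∈X} ν(x) log h(x) = (l/r) log Z_f + log Z_v − l log Z_{fv}. -/
/-! Write `C` and `S` for the normalizers of the two BP updates. Multiplying the update of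
`m_{v→f}` by `m_{f→v}`, resp. the update of `m_{f→v}` by `m_{v→f}`, and summing gives
`Z_v = Z_fv C` and `r Z_f = Z_fv S`; in particular `ν ∝ m_{v→f} m_{f→v}`, and the identity
`m_{v→f}(z) B(z) = Σ_i Σ_{x_i = z} f(x) ∏_j m_{v→f}(x_j)` is exactly the consistency of `(ν, μ)`.
Taking logarithms of the product forms of `μ`, `ν` and `m_{v→f}`, and using consistency to
turn `Σ_x μ(x) Σ_i log m_{v→f}(x_i)` into `r Σ ν log m_{v→f}`, writes every term of the
exponent through `Σ ν log m_{f→v}`, `Σ ν log h` and the normalizers; these cancel, leaving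
`(l/r) log Z_f + l log C - (l-1) log Z_v` with `log C = log Z_v - log Z_fv`. -/

open Finset

open Real

theorem sum_mul_log_mul_div {α : Type*} [Fintype α] (q a b : α → ℝ) (c : ℝ)
    (ha : ∀ x, q x ≠ 0 → a x ≠ 0) (hb : ∀ x, b x ≠ 0) (hc : c ≠ 0) (hq : ∑ x, q x = 1) :
    ∑ x, q x * log (a x * b x / c) = ∑ x, q x * log (a x) + ∑ x, q x * log (b x) - log c := by
  have hterm x :
      q x * log (a x * b x / c) = q x * log (a x) + q x * log (b x) - q x * log c := by
    by_cases hqx : q x = 0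
    · simp [hqx]
    · rw [log_div (mul_ne_zero (ha x hqx) (hb x)) hc, log_mul (ha x hqx) (hb x)]
      ring
  rw [sum_congr rfl fun x _ => hterm x, sum_sub_distrib, sum_add_distrib, ← sum_mul, hq, one_mul]

theorem sum_mul_log_mul_pow_div {α : Type*} [Fintype α] (q a b : α → ℝ) (k : ℕ) (c : ℝ)
    (ha : ∀ x, q x ≠ 0 → a x ≠ 0) (hb : ∀ x, b x ≠ 0) (hc : c ≠ 0) (hq : ∑ x, q x = 1) :
    ∑ x, q x * log (a x * b x ^ k / c) =
      ∑ x, q x * log (a x) + k * ∑ x, q x * log (b x) - log c := by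
  rw [sum_mul_log_mul_div q a _ c ha (fun x => pow_ne_zero k (hb x)) hc hq]
  simp only [log_pow, mul_left_comm _ (k : ℝ), ← mul_sum]

theorem mul_pow_eq_mul_mul_of_mul_eq {l : ℕ} {h m m' C : ℝ} (hl : 0 < l)
    (hm : m * C = h * m' ^ (l - 1)) : h * m' ^ l = m' * m * C := by
  rw [← pow_sub_one_mul hl.ne', ← mul_assoc, ← hm]
  ring

theorem sum_eq_one_of_eq_div {α : Type*} [Fintype α] {p w : α → ℝ} {Z : ℝ}
    (hp : ∀ x, p x = w x / Z) (hZ : Z = ∑ x, w x) (hZ0 : Z ≠ 0) : ∑ x, p x = 1 := by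
  simp only [hp, ← sum_div, ← hZ, div_self hZ0]

theorem variable_node_exponent_eq {X : Type*} [Fintype X] {l : ℕ} {h m m' ν : X → ℝ}
    {C Z W : ℝ} (hl : 0 < l) (hm' : ∀ x, m' x ≠ 0) (hC : C ≠ 0) (hW : W ≠ 0)
    (hm : ∀ x, m x = h x * m' x ^ (l - 1) / C) (hν : ∀ x, ν x = h x * m' x ^ l / Z)
    (hZ : Z = W * C) (hν1 : ∑ x, ν x = 1) :
    ((l : ℝ) - 1) * ∑ x, ν x * log (ν x) - l * ∑ x, ν x * log (m x) + ∑ x, ν x * log (h x) =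
      log Z - l * log W := by
  have hZ0 : Z ≠ 0 := hZ ▸ mul_ne_zero hW hC
  have hνh x (hx : ν x ≠ 0) : h x ≠ 0 := fun h0 => hx (by rw [hν, h0]; simp)
  have eν := sum_mul_log_mul_pow_div ν h m' l Z hνh hm' hZ0 hν1
  have em := sum_mul_log_mul_pow_div ν h m' (l - 1) C hνh hm' hC hν1
  simp only [← hν] at eν
  simp only [← hm, Nat.cast_pred hl] at em
  have elogZ : log Z = log W + log C := by rw [hZ, log_mul hW hC]
  linear_combination ((l : ℝ) - 1) * eν - (l : ℝ) * em - (l : ℝ) * elogZ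

section Marginal

variable {ι X : Type*} [Fintype ι] [DecidableEq ι] [Fintype X] [DecidableEq X]

-- `card ι` times the mean coordinate marginal; consistency of `(ν, μ)` is `marginalSum μ = r • ν`.
noncomputable def marginalSum (p : (ι → X) → ℝ) (z : X) : ℝ :=
  ∑ i, ∑ y ∈ univ.filter (fun y : ι → X => y i = z), p y

theorem sum_mul_sum_apply_eq_sum_marginalSum (p : (ι → X) → ℝ) (φ : X → ℝ) :
    ∑ y, p y * ∑ i, φ (y i) = ∑ z, marginalSum p z * φ z := by
  simp only [marginalSum, mul_sum, sum_mul]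
  rw [sum_comm, sum_comm (s := univ (α := X))]
  refine sum_congr rfl fun i _ => ?_
  rw [← sum_fiberwise univ (fun y : ι → X => y i)]
  refine sum_congr rfl fun z _ => sum_congr rfl fun y hy => ?_
  rw [(mem_filter.mp hy).2]

theorem sum_marginalSum (p : (ι → X) → ℝ) :
    ∑ z, marginalSum p z = Fintype.card ι * ∑ y, p y := by
  simpa [mul_comm, mul_sum] using (sum_mul_sum_apply_eq_sum_marginalSum p (fun _ => 1)).symm

theorem marginalSum_div (p : (ι → X) → ℝ) (c : ℝ) (z : X) :
    marginalSum (fun y => p y / c) z = marginalSum p z / c := by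
  simp only [marginalSum, sum_div]

theorem sum_mul_log_self_of_eq_mul_prod_div
    (μ f : (ι → X) → ℝ) (m : X → ℝ) (Z : ℝ) (hm : ∀ x, m x ≠ 0) (hZ : Z ≠ 0)
    (hμ : ∀ y, μ y = (f y * ∏ i, m (y i)) / Z) (hμ1 : ∑ y, μ y = 1) :
    ∑ y, μ y * log (μ y) =
      ∑ y, μ y * log (f y) + ∑ z, marginalSum μ z * log (m z) - log Z := by
  have hf : ∀ y, μ y ≠ 0 → f y ≠ 0 := fun y hy hfy => hy (by rw [hμ y, hfy]; simp)
  calc ∑ y, μ y * log (μ y) = ∑ y, μ y * log ((f y * ∏ i, m (y i)) / Z) :=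
        sum_congr rfl fun y _ => by rw [← hμ y]
    _ = _ := by
      rw [sum_mul_log_mul_div μ f _ Z hf (fun y => prod_ne_zero_iff.mpr fun i _ => hm _) hZ hμ1,
        ← sum_mul_sum_apply_eq_sum_marginalSum]
      simp only [log_prod fun i _ => hm _]

end Marginal

section BeliefPropagation

variable {X : Type*} [Fintype X] [DecidableEq X] {r : ℕ}

theorem mul_bpB_eq_marginalSum (f : (Fin r → X) → ℝ) (m : X → ℝ) (z : X) :
    m z * bpB f m z = marginalSum (fun y => f y * ∏ j, m (y j)) z := by
  simp only [bpB, marginalSum, mul_sum]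
  refine sum_congr rfl fun i _ => sum_congr rfl fun y hy => ?_
  rw [← mul_prod_erase univ (fun j => m (y j)) (mem_univ i), (mem_filter.mp hy).2]
  ring

theorem sum_mul_bpB (f : (Fin r → X) → ℝ) (m : X → ℝ) :
    ∑ z, m z * bpB f m z = r * ∑ y, f y * ∏ j, m (y j) := by
  simp only [mul_bpB_eq_marginalSum, sum_marginalSum, Fintype.card_fin]

theorem natCast_mul_sum_eq_sum_mul_mul_of_bpB {f : (Fin r → X) → ℝ} {m m' : X → ℝ} {S : ℝ}
    (hB : ∀ x, bpB f m x = m' x * S) :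
    r * ∑ y, f y * ∏ j, m (y j) = (∑ x, m' x * m x) * S := by
  rw [← sum_mul_bpB, sum_mul]
  exact sum_congr rfl fun x _ => by rw [hB]; ring

theorem marginalSum_eq_of_bpB {f : (Fin r → X) → ℝ} {m m' : X → ℝ} {S Z W : ℝ}
    (hB : ∀ x, bpB f m x = m' x * S) (hZ : r * Z = W * S) (hZ0 : Z ≠ 0) (hW : W ≠ 0)
    (z : X) :
    marginalSum (fun y => (f y * ∏ j, m (y j)) / Z) z = r * (m' z * m z / W) := by
  rw [marginalSum_div, ← mul_bpB_eq_marginalSum, hB]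
  field_simp
  linear_combination -(m z * m' z) * hZ

end BeliefPropagation

theorem magnetic_field_bp_fixed_point_value_general
    {X : Type*} [Fintype X] [DecidableEq X] [Nonempty X]
    (l r : ℕ) (hl : 0 < l)
    (f : (Fin r → X) → ℝ)
    (h : X → ℝ)
    (mvf mfv : X → ℝ) (hmvf : ∀ x, 0 < mvf x) (hmfv : ∀ x, 0 < mfv x)
    (hbp1 : ∀ x, mvf x = h x * mfv x ^ (l - 1) / ∑ z : X, h z * mfv z ^ (l - 1))
    (hbp2 : ∀ x, mfv x = bpB f mvf x / ∑ z : X, bpB f mvf z)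
    (Zv Zf Zfv : ℝ)
    (hZv : Zv = ∑ x : X, h x * mfv x ^ l)
    (hZf : Zf = ∑ y : Fin r → X, f y * ∏ i, mvf (y i))
    (hZfv : Zfv = ∑ x : X, mfv x * mvf x)
    (ν : X → ℝ) (hνdef : ∀ x, ν x = h x * mfv x ^ l / Zv)
    (μ : (Fin r → X) → ℝ) (hμdef : ∀ x, μ x = (f x * ∏ i, mvf (x i)) / Zf) :
    (∀ z : X,
      (1 / (r : ℝ)) * ∑ i : Fin r,
          ∑ x ∈ Finset.univ.filter (fun x : Fin r → X => x i = z), μ x = ν z) ∧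
    ((l : ℝ) / (r : ℝ)) * (-∑ x : Fin r → X, μ x * Real.log (μ x))
        - ((l : ℝ) - 1) * (-∑ x : X, ν x * Real.log (ν x))
        + ((l : ℝ) / (r : ℝ)) * ∑ x : Fin r → X, μ x * Real.log (f x)
        + ∑ x : X, ν x * Real.log (h x)
      = ((l : ℝ) / (r : ℝ)) * Real.log Zf + Real.log Zv - (l : ℝ) * Real.log Zfv := by
  obtain ⟨x₀⟩ := ‹Nonempty X›
  set C := ∑ z : X, h z * mfv z ^ (l - 1)
  set S := ∑ z : X, bpB f mvf z
  have hC : C ≠ 0 := (div_ne_zero_iff.mp (hbp1 x₀ ▸ (hmvf x₀).ne')).2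
  have hS : S ≠ 0 := (div_ne_zero_iff.mp (hbp2 x₀ ▸ (hmfv x₀).ne')).2
  have hvar x : h x * mfv x ^ l = mfv x * mvf x * C :=
    mul_pow_eq_mul_mul_of_mul_eq hl ((eq_div_iff hC).mp (hbp1 x))
  have hfac x : bpB f mvf x = mfv x * S := (div_eq_iff hS).mp (hbp2 x).symm
  have hZfv0 : Zfv ≠ 0 :=
    hZfv ▸ (sum_pos (fun x _ => mul_pos (hmfv x) (hmvf x)) univ_nonempty).ne'
  have hZvC : Zv = Zfv * C := by rw [hZv, hZfv, sum_mul]; exact sum_congr rfl fun x _ => hvar x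
  have hZfS : r * Zf = Zfv * S := hZf ▸ hZfv ▸ natCast_mul_sum_eq_sum_mul_mul_of_bpB hfac
  obtain ⟨hr, hZf0⟩ := mul_ne_zero_iff.mp (hZfS ▸ mul_ne_zero hZfv0 hS)
  have hcons z : marginalSum μ z = r * ν z := by
    rw [hνdef, hvar, hZvC, mul_div_mul_right _ _ hC, funext hμdef]
    exact marginalSum_eq_of_bpB hfac hZfS hZf0 hZfv0 z
  have eμ := sum_mul_log_self_of_eq_mul_prod_div μ f mvf Zf (fun x => (hmvf x).ne') hZf0 hμdef
    (sum_eq_one_of_eq_div hμdef hZf hZf0)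
  simp only [hcons, mul_assoc, ← mul_sum] at eμ
  have eν := variable_node_exponent_eq hl (fun x => (hmfv x).ne') hC hZfv0 hbp1 hνdef hZvC
    (sum_eq_one_of_eq_div hνdef hZv (hZvC ▸ mul_ne_zero hZfv0 hC))
  refine ⟨fun z => ?_, ?_⟩
  · rw [one_div, inv_mul_eq_iff_eq_mul₀ hr]
    exact hcons z
  · linear_combination (-(l / r : ℝ)) * eμ + eν
      - (l * ∑ x, ν x * log (mvf x)) * mul_inv_cancel₀ hr

/-- for the (l,r)-regular ensemble with magnetic field h, at a BP fixed point
the induced beliefs `(ν,μ)` are consistent and the exponent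
`(l/r)H(μ) − (l−1)H(ν) + (l/r)Σ μ log f + Σ ν log h` equals
`(l/r)log Z_f + log Z_v − l log Z_fv`. -/
theorem magnetic_field_bp_fixed_point_value
    {X : Type*} [Fintype X] [DecidableEq X] [Nonempty X]
    (l r : ℕ) (hl : 0 < l) (hr : 0 < r)
    (f : (Fin r → X) → ℝ) (hf : ∀ x, 0 ≤ f x) (hfne : ∃ x, f x ≠ 0)
    (h : X → ℝ) (hh : ∀ x, 0 < h x)
    (mvf mfv : X → ℝ) (hmvf : ∀ x, 0 < mvf x) (hmfv : ∀ x, 0 < mfv x)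
    (hmvf1 : ∑ x : X, mvf x = 1) (hmfv1 : ∑ x : X, mfv x = 1)
    (hbp1 : ∀ x, mvf x = h x * mfv x ^ (l - 1) / ∑ z : X, h z * mfv z ^ (l - 1))
    (hbp2 : ∀ x, mfv x = bpB f mvf x / ∑ z : X, bpB f mvf z)
    (Zv Zf Zfv : ℝ)
    (hZv : Zv = ∑ x : X, h x * mfv x ^ l)
    (hZf : Zf = ∑ y : Fin r → X, f y * ∏ i, mvf (y i))
    (hZfv : Zfv = ∑ x : X, mfv x * mvf x)
    (ν : X → ℝ) (hνdef : ∀ x, ν x = h x * mfv x ^ l / Zv)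
    (μ : (Fin r → X) → ℝ) (hμdef : ∀ x, μ x = (f x * ∏ i, mvf (x i)) / Zf) :
    (∀ z : X,
      (1 / (r : ℝ)) * ∑ i : Fin r,
          ∑ x ∈ Finset.univ.filter (fun x : Fin r → X => x i = z), μ x = ν z) ∧
    ((l : ℝ) / (r : ℝ)) * (-∑ x : Fin r → X, μ x * Real.log (μ x))
        - ((l : ℝ) - 1) * (-∑ x : X, ν x * Real.log (ν x))
        + ((l : ℝ) / (r : ℝ)) * ∑ x : Fin r → X, μ x * Real.log (f x)
        + ∑ x : X, ν x * Real.log (h x)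
      = ((l : ℝ) / (r : ℝ)) * Real.log Zf + Real.log Zv - (l : ℝ) * Real.log Zfv :=
  magnetic_field_bp_fixed_point_value_general l r hl f h mvf mfv hmvf hmfv hbp1 hbp2 Zv Zf Zfv hZv
    hZf hZfv ν hνdef μ hμdef
end
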